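/- arXiv:2310.13775 — 9 statements merged into one kernel-verified Lean document; each statement's English description precedes it below -/
import Mathlib

section
/- Let p be an odd prime and n a positive integer, q = p^n. Let F : F_q → F_q be a function that is either odd (F(−x) = −F(x) for all x) or even (F(−x) = F(x) for all x). If the second-order zero differential uniformity of F equals 1, i.e. max{∇_F(a,b) : a, b ∈ F_q^*} = 1, then F is an APN function, i.e. Δ_F = 2. Equivalently, if Δ_F > 2 then ∇_F ≠ 1. -/
open Finset

/-- Second-order zero differential spectrum of `f` at `(a, b)`:
the number of `X` with `f(X+a+b) - f(X+b) - f(X+a) + f(X) = 0`. -/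
def sozdSpec {K : Type*} [Field K] [Fintype K] [DecidableEq K] (f : K → K) (a b : K) : ℕ :=
  (Finset.univ.filter fun X : K => f (X + a + b) - f (X + b) - f (X + a) + f X = 0).card

/-- DDT entry of `f` at `(a, b)`: the number of `X` with `f(X+a) - f(X) = b`. -/
def ddtEntry {K : Type*} [Field K] [Fintype K] [DecidableEq K] (f : K → K) (a b : K) : ℕ :=
  (Finset.univ.filter fun X : K => f (X + a) - f X = b).card

/-- Differential uniformity of `f`: `max {Δ_f(a,b) : a ≠ 0, b}`. -/
def diffUnif {K : Type*} [Field K] [Fintype K] [DecidableEq K] (f : K → K) : ℕ :=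
  Finset.sup ((Finset.univ.filter fun a : K => a ≠ 0) ×ˢ Finset.univ)
    fun ab => ddtEntry f ab.1 ab.2

/-- Second-order zero differential uniformity (odd characteristic):
`max {∇_f(a,b) : a ≠ 0, b ≠ 0}`. -/
def sozdUnifOdd {K : Type*} [Field K] [Fintype K] [DecidableEq K] (f : K → K) : ℕ :=
  Finset.sup ((Finset.univ.filter fun a : K => a ≠ 0) ×ˢ
      (Finset.univ.filter fun b : K => b ≠ 0))
    fun ab => sozdSpec f ab.1 ab.2

private lemma keyA {K : Type*} [Field K] [Fintype K] [DecidableEq K]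
    (f : K → K)
    (hparity : (∀ x : K, f (-x) = -f x) ∨ (∀ x : K, f (-x) = f x))
    {a b X : K}
    (hle : sozdSpec f a b ≤ 1)
    (hX : f (X + a + b) - f (X + b) - f (X + a) + f X = 0) :
    2 * X = -(a + b) := by
  set Y := -X - a - b with hYdef
  have e1 : Y + a + b = -X := by rw [hYdef]; ring
  have e2 : Y + b = -(X + a) := by rw [hYdef]; ring
  have e3 : Y + a = -(X + b) := by rw [hYdef]; ring
  have e4 : Y = -(X + a + b) := by rw [hYdef]; ring
  have hYsol : f (Y + a + b) - f (Y + b) - f (Y + a) + f Y = 0 := by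
    rw [e1, e2, e3, e4]
    rcases hparity with hodd | heven
    · rw [hodd, hodd, hodd, hodd]; linear_combination -hX
    · rw [heven, heven, heven, heven]; linear_combination hX
  unfold sozdSpec at hle
  have hXm : X ∈ Finset.univ.filter
      (fun X : K => f (X + a + b) - f (X + b) - f (X + a) + f X = 0) :=
    Finset.mem_filter.mpr ⟨Finset.mem_univ _, hX⟩
  have hYm : Y ∈ Finset.univ.filter
      (fun X : K => f (X + a + b) - f (X + b) - f (X + a) + f X = 0) :=
    Finset.mem_filter.mpr ⟨Finset.mem_univ _, hYsol⟩
  have hXY : X = Y := Finset.card_le_one.mp hle _ hXm _ hYm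
  rw [hYdef] at hXY
  linear_combination hXY

/-- If an odd or even function over `F_{p^n}` (`p` an odd prime) has second-order zero
differential uniformity equal to `1`, then it is APN. -/
theorem sozd_one_uniform_implies_APN
    {p n : ℕ} (hp : p.Prime) (hp2 : p ≠ 2) (hn : 0 < n)
    {K : Type*} [Field K] [Fintype K] [DecidableEq K] [CharP K p]
    (hcard : Fintype.card K = p ^ n)
    (f : K → K)
    (hparity : (∀ x : K, f (-x) = -f x) ∨ (∀ x : K, f (-x) = f x))
    (h1 : sozdUnifOdd f = 1) :
    diffUnif f = 2 := by
  have h2K : (2 : K) ≠ 0 := by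
    intro h
    have h2 : ((2 : ℕ) : K) = 0 := by exact_mod_cast h
    have := (CharP.cast_eq_zero_iff K p 2).mp h2
    exact hp2 ((Nat.prime_dvd_prime_iff_eq hp Nat.prime_two).mp this)
  -- every sozdSpec with nonzero a, b is ≤ 1
  have hle : ∀ a b : K, a ≠ 0 → b ≠ 0 → sozdSpec f a b ≤ 1 := by
    intro a b ha hb
    have hmem : ((a, b) : K × K) ∈
        ((Finset.univ.filter fun a : K => a ≠ 0) ×ˢ
          (Finset.univ.filter fun b : K => b ≠ 0)) := by
      simp [Finset.mem_product, ha, hb]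
    have h := Finset.le_sup (f := fun ab : K × K => sozdSpec f ab.1 ab.2) hmem
    rw [← h1]; unfold sozdUnifOdd; exact h
  -- upper bound: every ddt entry with a ≠ 0 is ≤ 2
  have hddt : ∀ a c : K, a ≠ 0 → ddtEntry f a c ≤ 2 := by
    intro a c ha
    unfold ddtEntry
    set S := Finset.univ.filter (fun X : K => f (X + a) - f X = c) with hS
    rcases S.eq_empty_or_nonempty with hE | ⟨X, hXS⟩
    · simp [hE]
    · have hXeq : f (X + a) - f X = c := (Finset.mem_filter.mp hXS).2
      have hsub : S ⊆ {X, -a - X} := by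
        intro Y hYS
        have hYeq : f (Y + a) - f Y = c := (Finset.mem_filter.mp hYS).2
        by_cases hXY : Y = X
        · simp [hXY]
        · have hb : Y - X ≠ 0 := sub_ne_zero.mpr hXY
          have hsol : f (X + a + (Y - X)) - f (X + (Y - X)) - f (X + a) + f X = 0 := by
            have e1 : X + a + (Y - X) = Y + a := by ring
            have e2 : X + (Y - X) = Y := by ring
            rw [e1, e2]
            linear_combination hYeq - hXeq
          have := keyA f hparity (hle a (Y - X) ha hb) hsol
          have hY : Y = -a - X := by linear_combination this
          simp [hY]
      calc S.card ≤ ({X, -a - X} : Finset K).card := Finset.card_le_card hsub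
        _ ≤ 2 := Finset.card_insert_le _ _ |>.trans (by simp)
  have hub : diffUnif f ≤ 2 := by
    unfold diffUnif
    apply Finset.sup_le
    intro ab hab
    have ha : ab.1 ≠ 0 := by
      have := (Finset.mem_product.mp hab).1
      simpa using this
    exact hddt ab.1 ab.2 ha
  -- lower bound
  have hne : ((Finset.univ.filter fun a : K => a ≠ 0) ×ˢ
      (Finset.univ.filter fun b : K => b ≠ 0)).Nonempty := by
    refine ⟨((1 : K), (1 : K)), ?_⟩
    simp [Finset.mem_product]
  obtain ⟨ab, habmem, habval⟩ := Finset.exists_mem_eq_sup _ hne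
      (fun ab : K × K => sozdSpec f ab.1 ab.2)
  obtain ⟨a, b⟩ := ab
  have ha : a ≠ 0 := by have := (Finset.mem_product.mp habmem).1; simpa using this
  have hb : b ≠ 0 := by have := (Finset.mem_product.mp habmem).2; simpa using this
  have hspec : sozdSpec f a b = 1 := by
    rw [← habval, ← h1]; rfl
  have hpos : 0 < sozdSpec f a b := by omega
  unfold sozdSpec at hpos
  obtain ⟨X, hXm⟩ := Finset.card_pos.mp hpos
  have hXeq : f (X + a + b) - f (X + b) - f (X + a) + f X = 0 :=
    (Finset.mem_filter.mp hXm).2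
  set c := f (X + a) - f X with hc
  have hlb : 2 ≤ ddtEntry f a c := by
    unfold ddtEntry
    have hX1 : X ∈ Finset.univ.filter (fun Y : K => f (Y + a) - f Y = c) :=
      Finset.mem_filter.mpr ⟨Finset.mem_univ _, hc.symm⟩
    have hX2 : X + b ∈ Finset.univ.filter (fun Y : K => f (Y + a) - f Y = c) := by
      refine Finset.mem_filter.mpr ⟨Finset.mem_univ _, ?_⟩
      have e : X + b + a = X + a + b := by ring
      rw [e]
      linear_combination hXeq - hc
    have hne2 : X ≠ X + b := by
      intro h; exact hb (by linear_combination -h)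
    exact Finset.one_lt_card.mpr ⟨X, hX1, X + b, hX2, hne2⟩
  have hmemac : ((a, c) : K × K) ∈
      ((Finset.univ.filter fun a : K => a ≠ 0) ×ˢ (Finset.univ : Finset K)) := by
    simp [Finset.mem_product, ha]
  have hlb2 : ddtEntry f a c ≤ diffUnif f :=
    Finset.le_sup (f := fun ab : K × K => ddtEntry f ab.1 ab.2) hmemac
  omega
end

section
/- Let p be an odd prime and n a positive integer, q = p^n. If F : F_q → F_q is an odd function (F(−x) = −F(x) for all x ∈ F_q), then F is not a perfect nonlinear (PN) function, i.e. Δ_F ≠ 1. -/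
open Finset

/-- An odd function over `F_{p^n}` (`p` an odd prime) is never perfect nonlinear. -/
theorem odd_function_not_PN
    {p n : ℕ} (hp : p.Prime) (hp2 : p ≠ 2) (hn : 0 < n)
    {K : Type*} [Field K] [Fintype K] [DecidableEq K] [CharP K p]
    (hcard : Fintype.card K = p ^ n)
    (f : K → K) (hodd : ∀ x : K, f (-x) = -f x) :
    diffUnif f ≠ 1 := by
  intro h
  have h2 : (2 : K) ≠ 0 := by
    intro h0
    have hdvd : p ∣ 2 := (CharP.cast_eq_zero_iff K p 2).mp (by exact_mod_cast h0)
    exact hp2 ((Nat.prime_dvd_prime_iff_eq hp Nat.prime_two).mp hdvd)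
  have hf0 : f 0 = 0 := by
    have h1 : f (-0) = -f 0 := hodd 0
    rw [neg_zero] at h1
    have : (2 : K) * f 0 = 0 := by linear_combination h1
    rcases mul_eq_zero.mp this with h' | h'
    · exact absurd h' h2
    · exact h'
  have hne : (0 : K) ≠ -1 := by
    intro h01
    exact h2 (by linear_combination 2 * h01)
  -- both 0 and -1 witness ddtEntry f 1 (f 1) ≥ 2
  have hmem0 : (0 : K) ∈ Finset.univ.filter fun X : K => f (X + 1) - f X = f 1 := by
    simp [hf0]
  have hmem1 : (-1 : K) ∈ Finset.univ.filter fun X : K => f (X + 1) - f X = f 1 := by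
    simp only [Finset.mem_filter, Finset.mem_univ, true_and]
    rw [neg_add_cancel, hf0, hodd 1]
    ring
  have hsub : ({0, -1} : Finset K) ⊆
      Finset.univ.filter fun X : K => f (X + 1) - f X = f 1 := by
    intro x hx
    rcases Finset.mem_insert.mp hx with rfl | hx
    · exact hmem0
    · rw [Finset.mem_singleton.mp hx]; exact hmem1
  have hcard2 : 2 ≤ ddtEntry f 1 (f 1) := by
    have : ({0, -1} : Finset K).card = 2 := by
      rw [Finset.card_insert_of_notMem (by simp [hne]), Finset.card_singleton]
    calc 2 = ({0, -1} : Finset K).card := this.symm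
      _ ≤ _ := Finset.card_le_card hsub
  have hle : ddtEntry f 1 (f 1) ≤ diffUnif f := by
    unfold diffUnif
    exact Finset.le_sup (f := fun ab : K × K => ddtEntry f ab.1 ab.2) (b := ((1 : K), f 1)) 
      (Finset.mem_product.mpr ⟨Finset.mem_filter.mpr ⟨Finset.mem_univ _, one_ne_zero⟩,
        Finset.mem_univ _⟩)
  omega
end

section
/- Let p be an odd prime, n a positive integer, q = p^n, u ∈ F_q^*, and F(X) = X^{q−1} + uX^2 on F_q. Then for all a, b ∈ F_q^*: ∇_F(a,b) ≤ 2 if p ≠ 3, and ∇_F(a,b) ≤ 4 if p = 3. That is, F is second-order zero differentially 2-uniform when p ≠ 3 and second-order zero differentially 4-uniform when p = 3. -/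
open Finset

/-- The binomial `F(X) = X^{q-1} + uX^2` over `F_q`, `q = p^n`, `p` odd, is second-order
zero differentially `2`-uniform if `p ≠ 3`, and `4`-uniform if `p = 3`. -/
theorem sozd_uniformity_binomial
    {p n : ℕ} (hp : p.Prime) (hp2 : p ≠ 2) (hn : 0 < n)
    {K : Type*} [Field K] [Fintype K] [DecidableEq K] [CharP K p]
    (hcard : Fintype.card K = p ^ n)
    (u : K) (hu : u ≠ 0) :
    ∀ a b : K, a ≠ 0 → b ≠ 0 →
      (p ≠ 3 → sozdSpec (fun X : K => X ^ (p ^ n - 1) + u * X ^ 2) a b ≤ 2) ∧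
      (p = 3 → sozdSpec (fun X : K => X ^ (p ^ n - 1) + u * X ^ 2) a b ≤ 4) := by
  intro a b ha hb
  have hq1 : 1 < p ^ n := Nat.one_lt_pow hn.ne' hp.one_lt
  set e : ℕ := p ^ n - 1 with he
  have hg0 : (0:K) ^ e = 0 := zero_pow (by omega)
  have hg1 : ∀ y : K, y ≠ 0 → y ^ e = 1 := by
    intro y hy
    rw [he, ← hcard]
    exact FiniteField.pow_card_sub_one_eq_one y hy
  have hval : ∀ y : K, y ^ e = 0 ∨ y ^ e = 1 := by
    intro y
    rcases eq_or_ne y 0 with h | h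
    · exact Or.inl (by rw [h, hg0])
    · exact Or.inr (hg1 y h)
  have hcast : ∀ m : ℕ, (m : K) = 0 → p ∣ m := fun m h => (CharP.cast_eq_zero_iff K p m).mp h
  have h2 : (2:K) ≠ 0 := by
    intro h
    have hd : p ∣ 2 := hcast 2 (by exact_mod_cast h)
    exact hp2 ((Nat.prime_dvd_prime_iff_eq hp Nat.prime_two).mp hd)
  set c : K := 2 * u * a * b with hc
  have hcne : c ≠ 0 := mul_ne_zero (mul_ne_zero (mul_ne_zero h2 hu) ha) hb
  set S : Finset K :=
    Finset.univ.filter fun X : K =>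
      (fun X : K => X ^ e + u * X ^ 2) (X + a + b) - (fun X : K => X ^ e + u * X ^ 2) (X + b)
        - (fun X : K => X ^ e + u * X ^ 2) (X + a) + (fun X : K => X ^ e + u * X ^ 2) X = 0
    with hS
  have hspec : sozdSpec (fun X : K => X ^ e + u * X ^ 2) a b = S.card := rfl
  have mem_iff : ∀ X : K,
      X ∈ S ↔ (X + a + b) ^ e - (X + b) ^ e - (X + a) ^ e + X ^ e + c = 0 := by
    intro X
    rw [hS, Finset.mem_filter]
    simp only [Finset.mem_univ, true_and]
    constructor <;> intro h <;> linear_combination h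
  have mem4 : ∀ X ∈ S, X = 0 ∨ X = -a ∨ X = -b ∨ X = -a - b := by
    intro X hX
    by_contra hcon
    push_neg at hcon
    obtain ⟨h1', h2', h3', h4'⟩ := hcon
    rw [mem_iff] at hX
    rw [hg1 (X + a + b) (by intro h; exact h4' (by linear_combination h)),
        hg1 (X + b) (by intro h; exact h3' (by linear_combination h)),
        hg1 (X + a) (by intro h; exact h2' (by linear_combination h)),
        hg1 X h1'] at hX
    exact hcne (by linear_combination hX)
  have h0S : (0:K) ∈ S → (a + b) ^ e - 2 + c = 0 := by
    intro h
    rw [mem_iff] at h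
    simp only [zero_add] at h
    rw [hg1 b hb, hg1 a ha, hg0] at h
    linear_combination h
  have hABS : (-a - b : K) ∈ S → (-a - b) ^ e - 2 + c = 0 := by
    intro h
    rw [mem_iff] at h
    rw [show -a - b + a + b = (0:K) by ring, show -a - b + b = -a by ring,
        show -a - b + a = -b by ring, hg0, hg1 (-a) (neg_ne_zero.mpr ha),
        hg1 (-b) (neg_ne_zero.mpr hb)] at h
    linear_combination h
  have haS : (-a : K) ∈ S → 2 - (b - a) ^ e + c = 0 := by
    intro h
    rw [mem_iff] at h
    rw [show -a + a + b = b by ring, show -a + b = b - a by ring,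
        show -a + a = (0:K) by ring, hg1 b hb, hg0, hg1 (-a) (neg_ne_zero.mpr ha)] at h
    linear_combination h
  have hbS : (-b : K) ∈ S → 2 - (a - b) ^ e + c = 0 := by
    intro h
    rw [mem_iff] at h
    rw [show -b + a + b = a by ring, show -b + b = (0:K) by ring,
        show -b + a = a - b by ring, hg1 a ha, hg0, hg1 (-b) (neg_ne_zero.mpr hb)] at h
    linear_combination h
  constructor
  · -- p ≠ 3 : bound 2
    intro hp3
    have h3 : (3:K) ≠ 0 := by
      intro h
      have hd : p ∣ 3 := hcast 3 (by exact_mod_cast h)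
      exact hp3 ((Nat.prime_dvd_prime_iff_eq hp Nat.prime_three).mp hd)
    have h4 : (4:K) ≠ 0 := by
      intro h
      have hd : p ∣ 4 := hcast 4 (by exact_mod_cast h)
      have hd2 : p ∣ 2 := hp.dvd_of_dvd_pow (show p ∣ 2 ^ 2 by norm_num; exact hd)
      exact hp2 ((Nat.prime_dvd_prime_iff_eq hp Nat.prime_two).mp hd2)
    have aux : ∀ x y : K, (x = 0 ∨ x = 1) → (y = 0 ∨ y = 1) →
        x - 2 + c = 0 → 2 - y + c = 0 → False := by
      intro x y hx hy hxe hye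
      have h4xy : x + y = 4 := by linear_combination hxe - hye
      rcases hx with hx | hx <;> rcases hy with hy | hy <;> subst hx <;> subst hy
      · exact h4 (by linear_combination -h4xy)
      · exact h3 (by linear_combination -h4xy)
      · exact h3 (by linear_combination -h4xy)
      · exact h2 (by linear_combination -h4xy)
    have hI1 : (0:K) ∈ S → (-a:K) ∈ S → False := fun hX hY =>
      aux _ _ (hval (a + b)) (hval (b - a)) (h0S hX) (haS hY)
    have hI2 : (0:K) ∈ S → (-b:K) ∈ S → False := fun hX hY =>
      aux _ _ (hval (a + b)) (hval (a - b)) (h0S hX) (hbS hY)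
    have hI3 : (-a - b : K) ∈ S → (-a:K) ∈ S → False := fun hX hY =>
      aux _ _ (hval (-a - b)) (hval (b - a)) (hABS hX) (haS hY)
    have hI4 : (-a - b : K) ∈ S → (-b:K) ∈ S → False := fun hX hY =>
      aux _ _ (hval (-a - b)) (hval (a - b)) (hABS hX) (hbS hY)
    rw [hspec]
    by_cases hm : (-a : K) ∈ S ∨ (-b : K) ∈ S
    · have hsub2 : S ⊆ ({-a, -b} : Finset K) := by
        intro X hX
        rcases mem4 X hX with h | h | h | h
        · exfalso
          rcases hm with hm | hm
          · exact hI1 (h ▸ hX) hm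
          · exact hI2 (h ▸ hX) hm
        · simp [h]
        · simp [h]
        · exfalso
          rcases hm with hm | hm
          · exact hI3 (h ▸ hX) hm
          · exact hI4 (h ▸ hX) hm
      calc S.card ≤ ({-a, -b} : Finset K).card := Finset.card_le_card hsub2
        _ ≤ 2 := (Finset.card_insert_le _ _).trans (by simp)
    · push_neg at hm
      have hsub2 : S ⊆ ({0, -a - b} : Finset K) := by
        intro X hX
        rcases mem4 X hX with h | h | h | h
        · simp [h]
        · exact absurd (h ▸ hX) hm.1
        · exact absurd (h ▸ hX) hm.2
        · simp [h]
      calc S.card ≤ ({0, -a - b} : Finset K).card := Finset.card_le_card hsub2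
        _ ≤ 2 := (Finset.card_insert_le _ _).trans (by simp)
  · -- p = 3 : bound 4
    intro _
    rw [hspec]
    have hsub4 : S ⊆ ({0, -a, -b, -a - b} : Finset K) := by
      intro X hX
      simpa using mem4 X hX
    calc S.card ≤ ({0, -a, -b, -a - b} : Finset K).card := Finset.card_le_card hsub4
      _ ≤ 4 := by
        refine (Finset.card_insert_le _ _).trans (Nat.succ_le_succ ?_)
        refine (Finset.card_insert_le _ _).trans (Nat.succ_le_succ ?_)
        refine (Finset.card_insert_le _ _).trans (Nat.succ_le_succ ?_)
        simp
end

section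
/- Let n be an odd positive integer, m = (n−1)/2, d = 2·3^m + 1, and F(X) = X^d on F_{3^n}. Then for a, b ∈ F_{3^n}: ∇_F(a,b) = 3^n if ab = 0; if ab ≠ 0 and a·b^{3^m} + a^{3^m}·b ≠ 0 and (−a·b^{3^m}/(a·b^{3^m} + a^{3^m}·b))^E = 1, where E = ∑_{i=0}^{n−1} 3^{i·m}, then ∇_F(a,b) = 3; and ∇_F(a,b) = 1 in all other cases with ab ≠ 0. -/
/-!
Write `t = 3 ^ m`. As `z ↦ z ^ t` is additive in characteristic 3 and
`X ^ (2t+1) = (X ^ t) ^ 2 X`, the second difference of `X ^ (2t+1)` at `(a, b)` is `-L(X - a - b)`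
for the linearized polynomial `L(Y) = a^t b^t Y + S Y^t`, `S = a b^t + a^t b`; so `∇_F(a, b)`
counts the roots of `L`. For `ab ≠ 0` and `S ≠ 0` the nonzero roots solve
`Y ^ (t-1) = u := -a^t b^t / S`. Since `n = 2m + 1`, `gcd(t - 1, 3^n - 1) = 3^gcd(m,n) - 1 = 2`,
so this equation has the two solutions `±w` when `u` is a square and none otherwise. Finally
`(t - 1) E = 3^(nm) - 1` and `E` is odd, so `u` is a square iff `u ^ E = 1`, and `u ^ E` is the
`E`-th power of the quotient in the statement.
-/

open Finset

theorem sozdSpec_of_mul_eq_zero {K : Type*} [Field K] [Fintype K] [DecidableEq K] (f : K → K)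
    {a b : K} (hab : a * b = 0) : sozdSpec f a b = Fintype.card K := by
  rw [sozdSpec, ← card_univ]
  congr 1
  refine filter_true_of_mem fun X _ => ?_
  rcases mul_eq_zero.mp hab with rfl | rfl <;> simp

theorem second_diff_pow_two_mul_three_pow_add_one {K : Type*} [Field K] [CharP K 3] (m : ℕ)
    (a b X : K) :
    (X + a + b) ^ (2 * 3 ^ m + 1) - (X + b) ^ (2 * 3 ^ m + 1) - (X + a) ^ (2 * 3 ^ m + 1)
      + X ^ (2 * 3 ^ m + 1)
    = -(a ^ 3 ^ m * b ^ 3 ^ m * (X - a - b)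
        + (a * b ^ 3 ^ m + a ^ 3 ^ m * b) * (X - a - b) ^ 3 ^ m) := by
  have : Fact (Nat.Prime 3) := ⟨Nat.prime_three⟩
  have hpow : ∀ z : K, z ^ (2 * 3 ^ m + 1) = (z ^ 3 ^ m) ^ 2 * z := fun z => by ring
  have h3 : (3 : K) = 0 := CharP.cast_eq_zero K 3
  rw [hpow, hpow, hpow, hpow, add_pow_char_pow (x := X + a), add_pow_char_pow (x := X) (y := a),
    add_pow_char_pow (x := X) (y := b), sub_pow_char_pow (x := X - a),
    sub_pow_char_pow (x := X) (y := a)]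
  linear_combination (a ^ 3 ^ m * b ^ 3 ^ m * X + (a * b ^ 3 ^ m + a ^ 3 ^ m * b) * X ^ 3 ^ m) * h3

theorem sozdSpec_pow_two_mul_three_pow_add_one {K : Type*} [Field K] [Fintype K] [DecidableEq K]
    [CharP K 3] (m : ℕ) (a b : K) :
    sozdSpec (fun X : K => X ^ (2 * 3 ^ m + 1)) a b =
      #{Y | a ^ 3 ^ m * b ^ 3 ^ m * Y + (a * b ^ 3 ^ m + a ^ 3 ^ m * b) * Y ^ 3 ^ m = 0} := by
  refine card_equiv (Equiv.subRight (a + b)) fun X => ?_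
  simp only [mem_filter, mem_univ, true_and, Equiv.subRight_apply]
  rw [second_diff_pow_two_mul_three_pow_add_one, neg_eq_zero, sub_sub]

theorem isSquare_of_pow_eq_one_of_odd {M : Type*} [Monoid M] {u : M} {k : ℕ} (hk : Odd k)
    (hu : u ^ k = 1) : IsSquare u := by
  obtain ⟨j, rfl⟩ := hk
  exact ⟨u ^ (j + 1), by rw [← pow_add, show j + 1 + (j + 1) = 2 * j + 1 + 1 by ring, pow_succ,
    hu, one_mul]⟩

/-- Bézout: `gcd k N = k A + N B`, so `w = g ^ A` works. -/
theorem exists_pow_eq_pow_gcd {G₀ : Type*} [GroupWithZero G₀] {g : G₀} (hg : g ≠ 0) {N : ℕ}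
    (hN : g ^ N = 1) (k : ℕ) : ∃ w : G₀, w ≠ 0 ∧ w ^ k = g ^ k.gcd N := by
  refine ⟨g ^ k.gcdA N, zpow_ne_zero _ hg, ?_⟩
  rw [← zpow_natCast, ← zpow_natCast g, Nat.gcd_eq_gcd_ab, zpow_add₀ hg, ← zpow_mul,
    mul_comm (k.gcdA N), zpow_mul g (N : ℤ), zpow_natCast g N, hN, one_zpow, mul_one]

theorem filter_ne_zero_pow_eq_pow {K : Type*} [Field K] [Fintype K] [DecidableEq K] {k : ℕ}
    (hk : k.gcd (Fintype.card K - 1) = 2) {w : K} (hw : w ≠ 0) :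
    univ.filter (fun Y : K => Y ≠ 0 ∧ Y ^ k = w ^ k) = {w, -w} := by
  have hk2 : Even k := even_iff_two_dvd.2 (hk ▸ Nat.gcd_dvd_left _ _)
  ext Y
  simp only [mem_filter_univ, mem_insert, mem_singleton]
  constructor
  · rintro ⟨hY, hYk⟩
    have hsq : (Y / w) ^ 2 = 1 := by
      rw [← hk, pow_gcd_eq_one, div_pow, hYk, div_self (pow_ne_zero _ hw)]
      exact ⟨rfl, FiniteField.pow_card_sub_one_eq_one _ (div_ne_zero hY hw)⟩
    rcases sq_eq_one_iff.mp hsq with h | h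
    · exact Or.inl ((div_eq_one_iff_eq hw).mp h)
    · exact Or.inr (by rw [(div_eq_iff hw).mp h]; ring)
  · rintro (rfl | rfl)
    · exact ⟨hw, rfl⟩
    · exact ⟨neg_ne_zero.mpr hw, hk2.neg_pow w⟩

theorem filter_mul_add_mul_pow_eq_zero {K : Type*} [Field K] [Fintype K] [DecidableEq K]
    (c : K) {s : K} (hs : s ≠ 0) {t : ℕ} (ht : 0 < t) :
    univ.filter (fun Y : K => c * Y + s * Y ^ t = 0) =
      insert 0 (univ.filter fun Y : K => Y ≠ 0 ∧ Y ^ (t - 1) = -c / s) := by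
  obtain ⟨t, rfl⟩ : ∃ t', t = t' + 1 := ⟨t - 1, by omega⟩
  ext Y
  simp only [mem_filter_univ, mem_insert]
  rcases eq_or_ne Y 0 with rfl | hY
  · simp
  · rw [Nat.add_sub_cancel, eq_div_iff hs, pow_succ]
    constructor
    · intro h
      exact Or.inr ⟨hY, mul_right_cancel₀ hY (by linear_combination h)⟩
    · rintro (rfl | ⟨-, h⟩)
      · exact absurd rfl hY
      · linear_combination Y * h

theorem odd_sum_range_pow_mul {p n : ℕ} (hp : Odd p) (hn : Odd n) (m : ℕ) :
    Odd (∑ i ∈ range n, p ^ (i * m)) := by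
  rw [odd_sum_iff_odd_card_odd, filter_true_of_mem fun i _ => hp.pow, card_range]
  exact hn

theorem pow_pow_sub_one_pow_sum_eq_one {K : Type*} [Field K] [Fintype K] {p n : ℕ}
    (hcard : Fintype.card K = p ^ n) (m : ℕ) {y : K} (hy : y ≠ 0) :
    (y ^ (p ^ m - 1)) ^ (∑ i ∈ range n, p ^ (i * m)) = 1 := by
  have hp : 1 ≤ p ^ m := by
    have hK := hcard ▸ Fintype.one_lt_card (α := K)
    refine Nat.one_le_pow _ _ (Nat.pos_of_ne_zero ?_)
    rintro rfl
    rcases n with _ | n <;> simp at hK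
  have hexp : (p ^ m - 1) * ∑ i ∈ range n, p ^ (i * m) = Fintype.card K ^ m - 1 := by
    simp only [mul_comm _ m, pow_mul]
    rw [mul_comm, geom_sum_mul_of_one_le hp, hcard, ← pow_mul, ← pow_mul, mul_comm]
  rw [← pow_mul, hexp]
  refine mul_right_cancel₀ hy ?_
  rw [← pow_succ, Nat.sub_add_cancel (Nat.one_le_pow _ _ Fintype.card_pos),
    FiniteField.pow_card_pow, one_mul]

theorem card_filter_ne_zero_pow_three_pow_sub_one_eq {n m : ℕ} (hn : Odd n) (hnm : n = 2 * m + 1)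
    {K : Type*} [Field K] [Fintype K] [DecidableEq K] [CharP K 3]
    (hcard : Fintype.card K = 3 ^ n) (u : K) :
    #{Y | Y ≠ 0 ∧ Y ^ (3 ^ m - 1) = u} =
      if u ^ (∑ i ∈ range n, 3 ^ (i * m)) = 1 then 2 else 0 := by
  have hE := odd_sum_range_pow_mul (by decide : Odd 3) hn m
  split_ifs with hu
  · obtain ⟨v, rfl⟩ := isSquare_of_pow_eq_one_of_odd hE hu
    have hv : v ≠ 0 := by
      rintro rfl
      rw [mul_zero, zero_pow hE.pos.ne'] at hu
      exact zero_ne_one hu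
    have hgcd : (3 ^ m - 1).gcd (Fintype.card K - 1) = 2 := by
      rw [hcard, hnm, Nat.pow_sub_one_gcd_pow_sub_one]
      simp
    obtain ⟨w, hw0, hw⟩ :=
      exists_pow_eq_pow_gcd hv (FiniteField.pow_card_sub_one_eq_one v hv) (3 ^ m - 1)
    rw [hgcd, sq] at hw
    have hw_ne_neg : w ≠ -w := fun h =>
      hw0 ((Ring.eq_self_iff_eq_zero_of_char_ne_two (by rw [ringChar.eq K 3]; decide)).mp h.symm)
    rw [← hw, filter_ne_zero_pow_eq_pow hgcd hw0, card_pair hw_ne_neg]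
  · rw [card_eq_zero, filter_eq_empty_iff]
    rintro Y - ⟨hY, rfl⟩
    exact hu (pow_pow_sub_one_pow_sum_eq_one hcard m hY)

theorem card_filter_linearized_eq {n m : ℕ} (hn : Odd n) (hnm : n = 2 * m + 1)
    {K : Type*} [Field K] [Fintype K] [DecidableEq K] [CharP K 3]
    (hcard : Fintype.card K = 3 ^ n) {a b : K} (ha : a ≠ 0) (hb : b ≠ 0) :
    #{Y | a ^ 3 ^ m * b ^ 3 ^ m * Y + (a * b ^ 3 ^ m + a ^ 3 ^ m * b) * Y ^ 3 ^ m = 0} =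
      if a * b ^ 3 ^ m + a ^ 3 ^ m * b ≠ 0 ∧
          (-(a * b ^ 3 ^ m) / (a * b ^ 3 ^ m + a ^ 3 ^ m * b)) ^
            (∑ i ∈ range n, 3 ^ (i * m)) = 1
      then 3 else 1 := by
  set S := a * b ^ 3 ^ m + a ^ 3 ^ m * b
  set E := ∑ i ∈ range n, 3 ^ (i * m)
  have hAB : a ^ 3 ^ m * b ^ 3 ^ m ≠ 0 := mul_ne_zero (pow_ne_zero _ ha) (pow_ne_zero _ hb)
  rcases eq_or_ne S 0 with hS | hS
  · rw [if_neg (not_and_of_not_left _ (not_not.mpr hS)), hS]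
    simp only [zero_mul, add_zero, mul_eq_zero, hAB, false_or]
    rw [filter_eq', if_pos (mem_univ 0), card_singleton]
  · have hu : (-(a ^ 3 ^ m * b ^ 3 ^ m) / S) ^ E = (-(a * b ^ 3 ^ m) / S) ^ E := by
      have ha' : a ^ 3 ^ m = a * a ^ (3 ^ m - 1) := by
        rw [← pow_succ', Nat.sub_add_cancel (Nat.one_le_pow _ _ (by norm_num))]
      rw [ha', show -(a * a ^ (3 ^ m - 1) * b ^ 3 ^ m) / S = -(a * b ^ 3 ^ m) / S * a ^ (3 ^ m - 1)
        by ring, mul_pow, pow_pow_sub_one_pow_sum_eq_one hcard m ha, mul_one]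
    rw [filter_mul_add_mul_pow_eq_zero _ hS (by positivity : 0 < 3 ^ m),
      card_insert_of_notMem (by simp),
      card_filter_ne_zero_pow_three_pow_sub_one_eq hn hnm hcard, hu]
    simp only [ne_eq, hS, not_false_eq_true, true_and]
    split_ifs <;> rfl

theorem sozd_spectrum_dobbertin_general
    {n : ℕ} (hn : Odd n)
    {K : Type*} [Field K] [Fintype K] [DecidableEq K] [CharP K 3]
    (hcard : Fintype.card K = 3 ^ n)
    (m : ℕ) (hm : m = (n - 1) / 2)
    (a b : K) :
    (a * b = 0 → sozdSpec (fun X : K => X ^ (2 * 3 ^ m + 1)) a b = 3 ^ n) ∧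
    (a * b ≠ 0 →
      sozdSpec (fun X : K => X ^ (2 * 3 ^ m + 1)) a b =
        if a * b ^ (3 ^ m) + a ^ (3 ^ m) * b ≠ 0 ∧
            (-(a * b ^ (3 ^ m)) / (a * b ^ (3 ^ m) + a ^ (3 ^ m) * b)) ^
              (∑ i ∈ Finset.range n, 3 ^ (i * m)) = 1
        then 3 else 1) := by
  have hnm : n = 2 * m + 1 := by
    obtain ⟨j, rfl⟩ := hn
    omega
  refine ⟨fun hab => (sozdSpec_of_mul_eq_zero _ hab).trans hcard, fun hab => ?_⟩
  rw [sozdSpec_pow_two_mul_three_pow_add_one]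
  exact card_filter_linearized_eq hn hnm hcard (left_ne_zero_of_mul hab) (right_ne_zero_of_mul hab)

/-- Second-order zero differential spectrum of `F(X) = X^{2·3^m + 1}` over `F_{3^n}`,
`n` odd, `m = (n-1)/2`. -/
theorem sozd_spectrum_dobbertin
    {n : ℕ} (hn : Odd n) (hn0 : 0 < n)
    {K : Type*} [Field K] [Fintype K] [DecidableEq K] [CharP K 3]
    (hcard : Fintype.card K = 3 ^ n)
    (m : ℕ) (hm : m = (n - 1) / 2)
    (a b : K) :
    (a * b = 0 → sozdSpec (fun X : K => X ^ (2 * 3 ^ m + 1)) a b = 3 ^ n) ∧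
    (a * b ≠ 0 →
      sozdSpec (fun X : K => X ^ (2 * 3 ^ m + 1)) a b =
        if a * b ^ (3 ^ m) + a ^ (3 ^ m) * b ≠ 0 ∧
            (-(a * b ^ (3 ^ m)) / (a * b ^ (3 ^ m) + a ^ (3 ^ m) * b)) ^
              (∑ i ∈ Finset.range n, 3 ^ (i * m)) = 1
        then 3 else 1) :=
  sozd_spectrum_dobbertin_general hn hcard m hm a b
end

section
/- Let n be an odd positive integer, m = (n−1)/2, d = 2·3^m + 1, and F(X) = X^d on F_{3^n}. Then the second-order zero differential uniformity of F equals 3, i.e. max{∇_F(a,b) : a, b ∈ F_{3^n}^*} = 3. -/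
open Finset

section Aux
variable {K : Type*} [Field K] [Fintype K] [DecidableEq K] [CharP K 3]

private lemma iter_fix (w : K) (m : ℕ) (h : w ^ (3:ℕ) ^ m = w) (k : ℕ) :
    w ^ (3:ℕ) ^ (k * m) = w := by
  induction k with
  | zero => simpa using rfl
  | succ k ih =>
      have he : (3:ℕ) ^ ((k + 1) * m) = 3 ^ (k * m) * 3 ^ m := by
        rw [add_mul, one_mul, pow_add]
      rw [he, pow_mul, ih, h]

private lemma cube_fix {n m : ℕ} (hn : Odd n) (hn0 : 0 < n)
    (hcard : Fintype.card K = 3 ^ n) (hm : m = (n - 1) / 2)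
    (w : K) (h : w ^ (3:ℕ) ^ m = w) : w ^ 3 = w := by
  obtain ⟨t, ht⟩ := hn
  have hn2 : n = 2 * m + 1 := by omega
  have hq : w ^ (3:ℕ) ^ n = w := by rw [← hcard]; exact FiniteField.pow_card w
  rcases Nat.eq_zero_or_pos m with hm0 | hm1
  · have h1 : n = 1 := by omega
    rw [h1] at hq
    simpa using hq
  · obtain ⟨m', rfl⟩ : ∃ m', m = m' + 1 := ⟨m - 1, by omega⟩
    have key : (4 * (m' + 1)) * (m' + 1) = (n - 2) * n + 1 := by
      have h2 : n - 2 = 2 * m' + 1 := by omega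
      rw [h2, hn2]; ring
    have h1 : w ^ (3:ℕ) ^ ((4 * (m' + 1)) * (m' + 1)) = w := iter_fix w (m' + 1) h _
    rw [key] at h1
    have h2 : w ^ (3:ℕ) ^ ((n - 2) * n) = w := iter_fix w n hq (n - 2)
    rw [pow_succ, pow_mul, h2] at h1
    exact h1

private lemma card_sol_le (m : ℕ) (α β γ : K) (hα : α ≠ 0)
    (hfix : ∀ w : K, w ^ (3:ℕ) ^ m = w → w ^ 3 = w)
    (S : Finset K) (hS : ∀ X ∈ S, α * X + β * X ^ (3:ℕ) ^ m + γ = 0) :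
    S.card ≤ 3 := by
  haveI : Fact (Nat.Prime 3) := ⟨by norm_num⟩
  rcases S.eq_empty_or_nonempty with he | ⟨X₀, hX₀⟩
  · simp [he]
  by_cases hex : ∃ X₁ ∈ S, X₁ ≠ X₀
  · obtain ⟨X₁, hX₁, hne⟩ := hex
    have hker : ∀ X ∈ S, α * (X - X₀) + β * (X - X₀) ^ (3:ℕ) ^ m = 0 := by
      intro X hX
      rw [sub_pow_char_pow]
      linear_combination hS X hX - hS X₀ hX₀
    have hZ1 : α * (X₁ - X₀) + β * (X₁ - X₀) ^ (3:ℕ) ^ m = 0 := hker X₁ hX₁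
    have hZ1ne : X₁ - X₀ ≠ 0 := sub_ne_zero.mpr hne
    have hZ1s : (X₁ - X₀) ^ (3:ℕ) ^ m ≠ 0 := pow_ne_zero _ hZ1ne
    have hβ : β ≠ 0 := by
      rintro rfl
      rw [zero_mul, add_zero, mul_eq_zero] at hZ1
      rcases hZ1 with h | h
      · exact hα h
      · exact hZ1ne h
    have hsub : S ⊆ {X₀, X₁, X₀ - (X₁ - X₀)} := by
      intro X hX
      by_cases hZ0 : X - X₀ = 0
      · have : X = X₀ := by linear_combination hZ0
        simp [this]
      · have hZ : α * (X - X₀) + β * (X - X₀) ^ (3:ℕ) ^ m = 0 := hker X hX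
        have hcross : (X - X₀) ^ (3:ℕ) ^ m * (X₁ - X₀) = (X - X₀) * (X₁ - X₀) ^ (3:ℕ) ^ m := by
          apply mul_left_cancel₀ hβ
          linear_combination (X₁ - X₀) * hZ - (X - X₀) * hZ1
        have hw : ((X - X₀) * (X₁ - X₀)⁻¹) ^ (3:ℕ) ^ m = (X - X₀) * (X₁ - X₀)⁻¹ := by
          rw [mul_pow, inv_pow]
          field_simp
          linear_combination hcross
        have hw3 := hfix _ hw
        set w := (X - X₀) * (X₁ - X₀)⁻¹ with hwdef
        have hwne : w ≠ 0 := mul_ne_zero hZ0 (inv_ne_zero hZ1ne)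
        have hfac : (w - 1) * (w + 1) = 0 := by
          rcases mul_eq_zero.mp (show w * ((w - 1) * (w + 1)) = 0 by
            linear_combination hw3) with h | h
          · exact absurd h hwne
          · exact h
        rcases mul_eq_zero.mp hfac with h | h
        · have hw1 : w = 1 := by linear_combination h
          have : X = X₁ := by
            have := hw1
            rw [hwdef, mul_inv_eq_iff_eq_mul₀ hZ1ne, one_mul] at this
            linear_combination this
          simp [this]
        · have hw1 : w = -1 := by linear_combination h
          have : X = X₀ - (X₁ - X₀) := by
            have := hw1
            rw [hwdef, mul_inv_eq_iff_eq_mul₀ hZ1ne] at this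
            linear_combination this
          simp [this]
    calc S.card ≤ ({X₀, X₁, X₀ - (X₁ - X₀)} : Finset K).card := card_le_card hsub
      _ ≤ 2 + 1 := by
          apply (card_insert_le _ _).trans
          exact Nat.add_le_add_right ((card_insert_le _ _).trans (by simp)) 1
      _ = 3 := rfl
  · push_neg at hex
    have : S ⊆ {X₀} := fun X hX => by simp [hex X hX]
    exact (card_le_card this).trans (by simp)

private lemma sozd_eq (m : ℕ) (a b X : K) :
    (X + a + b) ^ (2 * 3 ^ m + 1) - (X + b) ^ (2 * 3 ^ m + 1) - (X + a) ^ (2 * 3 ^ m + 1)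
      + X ^ (2 * 3 ^ m + 1)
    = 2 * a ^ 3 ^ m * b ^ 3 ^ m * X
      + (2 * a * b ^ 3 ^ m + 2 * b * a ^ 3 ^ m) * X ^ 3 ^ m
      + (2 * a * a ^ 3 ^ m * b ^ 3 ^ m + a * (b ^ 3 ^ m) ^ 2 + b * (a ^ 3 ^ m) ^ 2
         + 2 * b * a ^ 3 ^ m * b ^ 3 ^ m) := by
  haveI : Fact (Nat.Prime 3) := ⟨by norm_num⟩
  have hd : ∀ Y : K, Y ^ (2 * 3 ^ m + 1) = Y * (Y ^ 3 ^ m) ^ 2 := fun Y => by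
    rw [pow_succ, mul_comm 2 (3 ^ m : ℕ), pow_mul]; ring
  rw [hd, hd, hd, hd]
  simp only [add_pow_char_pow]
  ring

end Aux

/-- `F(X) = X^{2·3^m + 1}` over `F_{3^n}`, `n` odd, `m = (n-1)/2`, is second-order zero
differentially `3`-uniform. -/
theorem sozd_uniformity_dobbertin
    {n : ℕ} (hn : Odd n) (hn0 : 0 < n)
    {K : Type*} [Field K] [Fintype K] [DecidableEq K] [CharP K 3]
    (hcard : Fintype.card K = 3 ^ n)
    (m : ℕ) (hm : m = (n - 1) / 2) :
    sozdUnifOdd (fun X : K => X ^ (2 * 3 ^ m + 1)) = 3 := by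
  haveI : Fact (Nat.Prime 3) := ⟨by norm_num⟩
  have h3 : (3 : K) = 0 := by exact_mod_cast CharP.cast_eq_zero K 3
  have h2 : (2 : K) ≠ 0 := by
    intro h
    have h1 : (1 : K) = 0 := by linear_combination h3 - h
    exact one_ne_zero h1
  have hfix : ∀ w : K, w ^ (3:ℕ) ^ m = w → w ^ 3 = w :=
    fun w hw => cube_fix hn hn0 hcard hm w hw
  apply le_antisymm
  · apply Finset.sup_le
    rintro ⟨a, b⟩ hab
    simp only [mem_product, mem_filter, mem_univ, true_and] at hab
    obtain ⟨ha, hb⟩ := hab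
    have hα : (2 * a ^ (3:ℕ) ^ m * b ^ (3:ℕ) ^ m : K) ≠ 0 :=
      mul_ne_zero (mul_ne_zero h2 (pow_ne_zero _ ha)) (pow_ne_zero _ hb)
    apply card_sol_le m _ (2 * a * b ^ (3:ℕ) ^ m + 2 * b * a ^ (3:ℕ) ^ m)
      (2 * a * a ^ (3:ℕ) ^ m * b ^ (3:ℕ) ^ m + a * (b ^ (3:ℕ) ^ m) ^ 2
        + b * (a ^ (3:ℕ) ^ m) ^ 2 + 2 * b * a ^ (3:ℕ) ^ m * b ^ (3:ℕ) ^ m) hα hfix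
    intro X hX
    rw [mem_filter] at hX
    have hX2 := hX.2
    simp only at hX2
    rw [sozd_eq] at hX2
    linear_combination hX2
  · unfold sozdUnifOdd
    have hmem : ((1:K), (1:K)) ∈
        ((Finset.univ.filter fun a : K => a ≠ 0) ×ˢ
          (Finset.univ.filter fun b : K => b ≠ 0)) := by
      simp
    refine le_trans ?_ (Finset.le_sup hmem)
    unfold sozdSpec
    have hodd : Odd (2 * 3 ^ m + 1) := ⟨3 ^ m, by ring⟩
    have hneg : ((-1 : K)) ^ (2 * 3 ^ m + 1) = -1 := hodd.neg_one_pow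
    have h0p : ((0 : K)) ^ (2 * 3 ^ m + 1) = 0 := zero_pow (by omega)
    have h1p : ((1 : K)) ^ (2 * 3 ^ m + 1) = 1 := one_pow _
    have h21 : (2 : K) = -1 := by linear_combination h3
    have h2p : ((2 : K)) ^ (2 * 3 ^ m + 1) = 2 := by rw [h21, hneg]
    have hdist1 : (0 : K) ≠ 1 := zero_ne_one
    have hdist2 : (0 : K) ≠ -1 := by
      intro h; exact one_ne_zero (by linear_combination h)
    have hdist3 : (1 : K) ≠ -1 := by
      intro h; exact h2 (by linear_combination h)
    have hcard3 : ({0, 1, -1} : Finset K).card = 3 := by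
      rw [card_insert_of_notMem (by simp [hdist1, hdist2]),
        card_insert_of_notMem (by simp [hdist3]), card_singleton]
    refine le_trans (le_of_eq hcard3.symm) (card_le_card ?_)
    intro X hX
    simp only [mem_insert, mem_singleton] at hX
    rw [mem_filter]
    refine ⟨mem_univ _, ?_⟩
    show (X + 1 + 1) ^ (2 * 3 ^ m + 1) - (X + 1) ^ (2 * 3 ^ m + 1)
      - (X + 1) ^ (2 * 3 ^ m + 1) + X ^ (2 * 3 ^ m + 1) = 0
    rcases hX with rfl | rfl | rfl
    · have e1 : (0 : K) + 1 + 1 = 2 := by ring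
      have e2 : (0 : K) + 1 = 1 := by ring
      rw [e1, e2, h2p, h1p, h0p]
      ring
    · have e1 : (1 : K) + 1 + 1 = 0 := by linear_combination h3
      have e2 : (1 : K) + 1 = 2 := by ring
      rw [e1, e2, h0p, h2p, h1p]
      linear_combination -h3
    · have e1 : (-1 : K) + 1 + 1 = 1 := by ring
      have e2 : (-1 : K) + 1 = 0 := by ring
      rw [e1, e2, h1p, h0p, hneg]
      ring
end

section
/- Let n and s be positive integers with 1 ≤ s < n and gcd(n, s+1) = 1, and let F(X) = X^{2^n − 2^s} on F_{2^n}. If a, b ∈ F_{2^n}^* with a ≠ b satisfy a·b^{2^s} + a^{2^s}·b = 0 (which forces gcd(s,n) > 1), then ∇_F(a,b) = 2^{gcd(s,n)} − 4. -/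
/-!
Scaling `X ↦ a X` reduces the count to `(a, b) = (1, c)` with `c = b / a`, and the hypothesis
says that `c` lies in the fixed field `E` of `x ↦ x ^ 2 ^ s`, which has `2 ^ gcd(s, n)` elements.
On `F_{2^n}` the map is `F(Y) = Y / Y ^ 2 ^ s` (using `0 / 0 = 0`). Put `t = X ^ 2 ^ s` and
`V = {0, 1, c, 1 + c}`; the `2 ^ s`-th power of `X + u` is `t + u` for `u ∈ V`, and in
characteristic `2`
  `∑_{u ∈ V} (X + u) / (t + u) = (X + t) c (c + 1) / ∏_{u ∈ V} (t + u)`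
whenever `X ∉ V`, while for `X ∈ V` the sum is `1`. So the zeros are exactly `E \ V`.
-/

open Finset

theorem IsCyclic.card_pow_eq_one_eq_gcd {G : Type*} [CommGroup G] [IsCyclic G] [Fintype G]
    [DecidableEq G] (m : ℕ) : #{g : G | g ^ m = 1} = Nat.gcd (Fintype.card G) m := by
  rw [← Fintype.card_subtype, ← Nat.card_eq_fintype_card, ← Nat.card_eq_fintype_card,
    ← IsCyclic.card_powMonoidHom_ker]
  rfl

theorem pow_eq_self_iff_eq_zero_or_pow_pred_eq_one {M : Type*} [GroupWithZero M] {q : ℕ}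
    (hq : 0 < q) (x : M) : x ^ q = x ↔ x = 0 ∨ x ^ (q - 1) = 1 := by
  obtain _ | r := q
  · omega
  rcases eq_or_ne x 0 with rfl | hx
  · simp
  · simp [pow_succ, hx]

namespace FiniteField

variable {K : Type*} [Field K] [Fintype K]

theorem card_pow_eq_self [DecidableEq K] {q : ℕ} (hq : 0 < q) :
    #{x : K | x ^ q = x} = Nat.gcd (Fintype.card K - 1) (q - 1) + 1 := by
  have hunits : ({x : K | x ^ q = x} : Finset K) =
      insert 0 (({u : Kˣ | u ^ (q - 1) = 1} : Finset Kˣ).map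
        ⟨Units.val, Units.val_injective⟩) := by
    ext x
    simp only [mem_filter_univ, pow_eq_self_iff_eq_zero_or_pow_pred_eq_one hq, mem_insert,
      mem_map, Function.Embedding.coeFn_mk]
    refine or_congr_right' fun hx =>
      ⟨fun h => ⟨Units.mk0 x hx, Units.ext (by simpa), rfl⟩, ?_⟩
    rintro ⟨u, hu, rfl⟩
    simpa using congr_arg Units.val hu
  rw [hunits, card_insert_of_notMem (by simp), card_map, IsCyclic.card_pow_eq_one_eq_gcd,
    Fintype.card_units]

theorem card_pow_prime_pow_eq_self [DecidableEq K] {p n : ℕ} (hp : 0 < p)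
    (hcard : Fintype.card K = p ^ n) (s : ℕ) : #{x : K | x ^ p ^ s = x} = p ^ Nat.gcd s n := by
  rw [card_pow_eq_self (Nat.pow_pos hp), hcard, Nat.pow_sub_one_gcd_pow_sub_one, Nat.gcd_comm,
    Nat.sub_add_cancel (Nat.one_le_pow _ _ hp)]

theorem pow_card_sub_eq_div {q : ℕ} (hq : q < Fintype.card K) (x : K) :
    x ^ (Fintype.card K - q) = x / x ^ q := by
  rcases eq_or_ne x 0 with rfl | hx
  · simp [zero_pow (Nat.sub_ne_zero_of_lt hq)]
  · rw [eq_div_iff (pow_ne_zero _ hx), ← pow_add, Nat.sub_add_cancel hq.le, pow_card]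

end FiniteField

theorem sozdSpec_pow_eq_sozdSpec_one_div {K : Type*} [Field K] [Fintype K] [DecidableEq K]
    (k : ℕ) {a : K} (ha : a ≠ 0) (b : K) :
    sozdSpec (fun X : K => X ^ k) a b = sozdSpec (fun X : K => X ^ k) 1 (b / a) := by
  refine (card_equiv (Equiv.mulLeft₀ a ha) fun X => ?_).symm
  have hscale : (a * X + a + b) ^ k - (a * X + b) ^ k - (a * X + a) ^ k + (a * X) ^ k
      = a ^ k * ((X + 1 + b / a) ^ k - (X + b / a) ^ k - (X + 1) ^ k + X ^ k) := by
    rw [show a * X + a + b = a * (X + 1 + b / a) by field_simp,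
      show a * X + b = a * (X + b / a) by field_simp, show a * X + a = a * (X + 1) by ring,
      mul_pow, mul_pow, mul_pow, mul_pow]
    ring
  simp [hscale, ha]

section CharTwo

variable {K : Type*} [Field K] [CharP K 2]

theorem card_zero_one_self_one_add [DecidableEq K] {c : K} (hc0 : c ≠ 0) (hc1 : c ≠ 1) :
    #({0, 1, c, 1 + c} : Finset K) = 4 := by
  have h1c : 1 + c ≠ 0 := fun h => hc1 (CharTwo.add_eq_zero.mp h).symm
  rw [card_insert_of_notMem, card_insert_of_notMem, card_insert_of_notMem, card_singleton] <;>
    simp [hc0, hc0.symm, hc1.symm, h1c.symm]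

theorem pow_two_pow_eq_self_of_mem [DecidableEq K] {s : ℕ} {c u : K} (hc : c ^ 2 ^ s = c)
    (hu : u ∈ ({0, 1, c, 1 + c} : Finset K)) : u ^ 2 ^ s = u := by
  simp only [mem_insert, mem_singleton] at hu
  rcases hu with rfl | rfl | rfl | rfl <;> simp [add_pow_char_pow, hc]

theorem four_term_div_eq_zero_iff {x t c : K} (hc0 : c ≠ 0) (hc1 : c ≠ 1) (ht : t ≠ 0)
    (ht1 : t + 1 ≠ 0) (htc : t + c ≠ 0) (ht1c : t + (1 + c) ≠ 0) :
    (x + (1 + c)) / (t + (1 + c)) - (x + c) / (t + c) - (x + 1) / (t + 1) + x / t = 0 ↔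
      x = t := by
  have key : (x + (1 + c)) / (t + (1 + c)) - (x + c) / (t + c) - (x + 1) / (t + 1) + x / t
      = (x + t) * (c * (c + 1)) / (t * (t + 1) * (t + c) * (t + (1 + c))) := by
    field_simp
    grind
  have hc1' : c + 1 ≠ 0 := fun h => hc1 (CharTwo.add_eq_zero.mp h)
  simp [key, ht, ht1, htc, ht1c, hc0, hc1', CharTwo.add_eq_zero]

theorem div_frobenius_second_diff_eq_zero_iff [DecidableEq K] {s : ℕ} {c : K}
    (hc : c ^ 2 ^ s = c) (hc0 : c ≠ 0) (hc1 : c ≠ 1) (X : K) :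
    (X + 1 + c) / (X + 1 + c) ^ 2 ^ s - (X + c) / (X + c) ^ 2 ^ s
        - (X + 1) / (X + 1) ^ 2 ^ s + X / X ^ 2 ^ s = 0 ↔
      X ^ 2 ^ s = X ∧ X ∉ ({0, 1, c, 1 + c} : Finset K) := by
  have hfrob : ∀ u ∈ ({0, 1, c, 1 + c} : Finset K), (X + u) ^ 2 ^ s = X ^ 2 ^ s + u :=
    fun u hu => by rw [add_pow_char_pow, pow_two_pow_eq_self_of_mem hc hu]
  rw [add_assoc X 1 c, hfrob (1 + c) (by simp), hfrob c (by simp), hfrob 1 (by simp)]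
  by_cases hX : X ∈ ({0, 1, c, 1 + c} : Finset K)
  · rw [pow_two_pow_eq_self_of_mem hc hX, iff_false_right fun h => h.2 hX]
    simp only [mem_insert, mem_singleton] at hX
    rcases hX with rfl | rfl | rfl | rfl <;> grind
  · have hXu : ∀ u ∈ ({0, 1, c, 1 + c} : Finset K), X ^ 2 ^ s + u ≠ 0 := fun u hu => by
      rw [← hfrob u hu]
      exact pow_ne_zero _ fun h => hX (CharTwo.add_eq_zero.mp h ▸ hu)
    simp only [mem_insert, mem_singleton, forall_eq_or_imp, forall_eq, add_zero] at hXu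
    rw [four_term_div_eq_zero_iff hc0 hc1 hXu.1 hXu.2.1 hXu.2.2.1 hXu.2.2.2]
    simp [hX, eq_comm]

theorem sozdSpec_pow_card_sub_two_pow_one [Fintype K] [DecidableEq K] {s : ℕ}
    (hs : 2 ^ s < Fintype.card K) {c : K} (hc : c ^ 2 ^ s = c) (hc0 : c ≠ 0) (hc1 : c ≠ 1) :
    sozdSpec (fun X : K => X ^ (Fintype.card K - 2 ^ s)) 1 c = #{x : K | x ^ 2 ^ s = x} - 4 := by
  have hV : ({0, 1, c, 1 + c} : Finset K) ⊆ ({x : K | x ^ 2 ^ s = x} : Finset K) := fun u hu =>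
    by simpa using pow_two_pow_eq_self_of_mem hc hu
  rw [← card_zero_one_self_one_add hc0 hc1, ← card_sdiff_of_subset hV, sozdSpec]
  congr 1
  ext X
  simp only [mem_filter_univ, mem_sdiff, FiniteField.pow_card_sub_eq_div hs,
    div_frobenius_second_diff_eq_zero_iff hc hc0 hc1]

end CharTwo

theorem sozd_inverse_like_degenerate_case_general
    {n s : ℕ} (hsn : s < n)
    {K : Type*} [Field K] [Fintype K] [DecidableEq K] [CharP K 2]
    (hcard : Fintype.card K = 2 ^ n)
    (a b : K) (ha : a ≠ 0) (hb : b ≠ 0) (hab : a ≠ b)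
    (hdeg : a * b ^ 2 ^ s + a ^ 2 ^ s * b = 0) :
    sozdSpec (fun X : K => X ^ (2 ^ n - 2 ^ s)) a b = 2 ^ Nat.gcd s n - 4 := by
  have hs : 2 ^ s < Fintype.card K := hcard ▸ Nat.pow_lt_pow_right one_lt_two hsn
  have hc : (b / a) ^ 2 ^ s = b / a := by
    rw [div_pow, div_eq_div_iff (pow_ne_zero _ ha) ha]
    linear_combination CharTwo.add_eq_zero.mp hdeg
  have hc1 : b / a ≠ 1 := fun h => hab ((div_eq_one_iff_eq ha).mp h).symm
  rw [sozdSpec_pow_eq_sozdSpec_one_div _ ha, ← hcard,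
    sozdSpec_pow_card_sub_two_pow_one hs hc (div_ne_zero hb ha) hc1,
    FiniteField.card_pow_prime_pow_eq_self two_pos hcard]

/-- For `F(X) = X^{2^n - 2^s}` over `F_{2^n}` with `gcd(n, s+1) = 1`: if `a, b ≠ 0`,
`a ≠ b` and `a·b^{2^s} + a^{2^s}·b = 0`, then `∇_F(a,b) = 2^{gcd(s,n)} - 4`. -/
theorem sozd_inverse_like_degenerate_case
    {n s : ℕ} (hs : 1 ≤ s) (hsn : s < n) (hgcd : Nat.gcd n (s + 1) = 1)
    {K : Type*} [Field K] [Fintype K] [DecidableEq K] [CharP K 2]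
    (hcard : Fintype.card K = 2 ^ n)
    (a b : K) (ha : a ≠ 0) (hb : b ≠ 0) (hab : a ≠ b)
    (hdeg : a * b ^ 2 ^ s + a ^ 2 ^ s * b = 0) :
    sozdSpec (fun X : K => X ^ (2 ^ n - 2 ^ s)) a b = 2 ^ Nat.gcd s n - 4 :=
  sozd_inverse_like_degenerate_case_general hsn hcard a b ha hb hab hdeg
end

section
/- Let n and s be positive integers with n − s = 3 and gcd(n, s+1) = 1, and let F(X) = X^{2^n − 2^s} on F_{2^n}. Then for all a, b ∈ F_{2^n}^* with a ≠ b, the second-order zero differential spectrum satisfies ∇_F(a,b) ∈ {0, 4}. -/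
open Finset

open Polynomial

/-- For `F(X) = X^{2^n - 2^s}` over `F_{2^n}` with `n - s = 3` and `gcd(n, s+1) = 1`,
every non-trivial second-order zero differential spectrum value is `0` or `4`. -/
theorem sozd_values_inverse_like_t_three
    {n s : ℕ} (hs : 0 < s) (hn : 0 < n) (hns : n - s = 3)
    (hgcd : Nat.gcd n (s + 1) = 1)
    {K : Type*} [Field K] [Fintype K] [DecidableEq K] [CharP K 2]
    (hcard : Fintype.card K = 2 ^ n) :
    ∀ a b : K, a ≠ 0 → b ≠ 0 → a ≠ b →
      sozdSpec (fun X : K => X ^ (2 ^ n - 2 ^ s)) a b = 0 ∨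
      sozdSpec (fun X : K => X ^ (2 ^ n - 2 ^ s)) a b = 4 := by
  intro a b ha hb hab
  haveI : Fact (Nat.Prime 2) := ⟨Nat.prime_two⟩
  have h2 : (2 : K) = 0 := by
    have := CharP.cast_eq_zero K 2
    exact_mod_cast this
  have hn3 : n = s + 3 := by omega
  have he : 2 ^ n - 2 ^ s = 7 * 2 ^ s := by
    have h8 : 2 ^ n = 2 ^ s * 8 := by rw [hn3, pow_add]; norm_num
    omega
  have habne : a + b ≠ 0 := by
    rw [← CharTwo.sub_eq_add]; exact sub_ne_zero.mpr hab
  have habab : a * b * (a + b) ≠ 0 := mul_ne_zero (mul_ne_zero ha hb) habne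
  -- the quartic
  set q : K → K := fun X =>
    X ^ 4 + (a ^ 2 + a * b + b ^ 2) * X ^ 2 + a * b * (a + b) * X
      + (a ^ 4 + a ^ 2 * b ^ 2 + b ^ 4) with hq
  have hfrob : ∀ u v : K, (u + v) ^ (2 ^ s) = u ^ (2 ^ s) + v ^ (2 ^ s) :=
    fun u v => add_pow_char_pow u v 2 s
  have hfactor : ∀ X : K,
      (X + a + b) ^ 7 + (X + b) ^ 7 + (X + a) ^ 7 + X ^ 7 = a * b * (a + b) * q X := by
    intro X
    rw [hq]
    linear_combination (b^7 + 3*a*b^6 + 10*a^2*b^5 + 17*a^3*b^4 + 17*a^4*b^3 + 10*a^5*b^2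
      + 3*a^6*b + a^7 + 7*X*b^6 + 21*X*a*b^5 + 52*X*a^2*b^4 + 69*X*a^3*b^3 + 52*X*a^4*b^2
      + 21*X*a^5*b + 7*X*a^6 + 21*X^2*b^5 + 52*X^2*a*b^4 + 104*X^2*a^2*b^3 + 104*X^2*a^3*b^2
      + 52*X^2*a^4*b + 21*X^2*a^5 + 35*X^3*b^4 + 70*X^3*a*b^3 + 105*X^3*a^2*b^2 + 70*X^3*a^3*b
      + 35*X^3*a^4 + 35*X^4*b^3 + 52*X^4*a*b^2 + 52*X^4*a^2*b + 35*X^4*a^3 + 21*X^5*b^2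
      + 21*X^5*a*b + 21*X^5*a^2 + 7*X^6*b + 7*X^6*a + 2*X^7) * h2
  have key : ∀ X : K,
      ((X + a + b) ^ (2 ^ n - 2 ^ s) - (X + b) ^ (2 ^ n - 2 ^ s)
        - (X + a) ^ (2 ^ n - 2 ^ s) + X ^ (2 ^ n - 2 ^ s) = 0) ↔ q X = 0 := by
    intro X
    rw [he]
    simp only [CharTwo.sub_eq_add]
    have h7 : ∀ Y : K, Y ^ (7 * 2 ^ s) = (Y ^ 7) ^ (2 ^ s) := fun Y => pow_mul Y 7 (2 ^ s)
    rw [h7 (X + a + b), h7 (X + b), h7 (X + a), h7 X]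
    have hsum : ((X + a + b) ^ 7) ^ (2 ^ s) + ((X + b) ^ 7) ^ (2 ^ s)
        + ((X + a) ^ 7) ^ (2 ^ s) + (X ^ 7) ^ (2 ^ s)
        = (a * b * (a + b) * q X) ^ (2 ^ s) := by
      rw [← hfactor X, hfrob, hfrob, hfrob]
    rw [hsum, pow_eq_zero_iff (by positivity : (2 : ℕ) ^ s ≠ 0), mul_eq_zero]
    simp [habab]
  -- rewrite the spec set
  have hSeq : (Finset.univ.filter fun X : K =>
        (fun X : K => X ^ (2 ^ n - 2 ^ s)) (X + a + b)
        - (fun X : K => X ^ (2 ^ n - 2 ^ s)) (X + b)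
        - (fun X : K => X ^ (2 ^ n - 2 ^ s)) (X + a)
        + (fun X : K => X ^ (2 ^ n - 2 ^ s)) X = 0)
      = Finset.univ.filter fun X : K => q X = 0 := by
    apply Finset.filter_congr
    intro X _
    simpa using key X
  set S : Finset K := Finset.univ.filter fun X : K => q X = 0 with hS
  have hspec : sozdSpec (fun X : K => X ^ (2 ^ n - 2 ^ s)) a b = S.card := by
    rw [sozdSpec, hSeq]
  -- card bound via roots of the quartic polynomial
  set P : Polynomial K := X ^ 4 + C (a ^ 2 + a * b + b ^ 2) * X ^ 2
      + C (a * b * (a + b)) * X + C (a ^ 4 + a ^ 2 * b ^ 2 + b ^ 4) with hP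
  have hPmonic : P.Monic := by rw [hP]; monicity!
  have hPdeg : P.natDegree = 4 := by rw [hP]; compute_degree!
  have hPne : P ≠ 0 := hPmonic.ne_zero
  have hPeval : ∀ x : K, P.eval x = q x := by
    intro x; rw [hP, hq]; simp
  have hsub : S ⊆ P.roots.toFinset := by
    intro x hx
    rw [hS, Finset.mem_filter] at hx
    rw [Multiset.mem_toFinset, Polynomial.mem_roots hPne]
    rw [IsRoot, hPeval]
    exact hx.2
  have hcard4 : S.card ≤ 4 := by
    calc S.card ≤ P.roots.toFinset.card := Finset.card_le_card hsub
      _ ≤ Multiset.card P.roots := Multiset.toFinset_card_le _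
      _ ≤ P.natDegree := Polynomial.card_roots' P
      _ = 4 := hPdeg
  -- Klein four invariance
  have hinva : ∀ x : K, q x = 0 → q (x + a) = 0 := by
    intro x hx
    rw [hq] at hx ⊢
    linear_combination hx + (a^2*b^2 + a^3*b + a^4 + x*a*b^2 + x*a^2*b + 3*x*a^3
      + 3*x^2*a^2 + 2*x^3*a) * h2
  have hinvb : ∀ x : K, q x = 0 → q (x + b) = 0 := by
    intro x hx
    rw [hq] at hx ⊢
    linear_combination hx + (b^4 + a*b^3 + a^2*b^2 + 3*x*b^3 + x*a*b^2 + x*a^2*b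
      + 3*x^2*b^2 + 2*x^3*b) * h2
  rcases Finset.eq_empty_or_nonempty S with hempty | ⟨x, hx⟩
  · left; rw [hspec, hempty, Finset.card_empty]
  · right
    rw [hS, Finset.mem_filter] at hx
    have hqx := hx.2
    have h1 : q (x + a) = 0 := hinva x hqx
    have h1' : q (x + b) = 0 := hinvb x hqx
    have h3 : q (x + a + b) = 0 := hinvb (x + a) h1
    have hmem : ∀ y : K, q y = 0 → y ∈ S := by
      intro y hy; rw [hS, Finset.mem_filter]; exact ⟨Finset.mem_univ y, hy⟩
    have hT : ({x, x + a, x + b, x + a + b} : Finset K) ⊆ S := by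
      intro y hy
      simp only [Finset.mem_insert, Finset.mem_singleton] at hy
      rcases hy with rfl | rfl | rfl | rfl
      · exact hmem _ hqx
      · exact hmem _ h1
      · exact hmem _ h1'
      · exact hmem _ h3
    have hTcard : ({x, x + a, x + b, x + a + b} : Finset K).card = 4 := by
      rw [Finset.card_insert_of_notMem, Finset.card_insert_of_notMem,
        Finset.card_insert_of_notMem, Finset.card_singleton]
      · simp only [Finset.mem_singleton]
        intro h
        exact ha (by linear_combination -h)
      · simp only [Finset.mem_insert, Finset.mem_singleton]
        push_neg
        refine ⟨fun h => hab (by linear_combination h), fun h => hb (by linear_combination -h)⟩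
      · simp only [Finset.mem_insert, Finset.mem_singleton]
        push_neg
        refine ⟨fun h => ha (by linear_combination -h), fun h => hb (by linear_combination -h),
          fun h => habne (by linear_combination -h)⟩
    have h4le : 4 ≤ S.card := hTcard ▸ Finset.card_le_card hT
    rw [hspec]
    omega
end

section
/- Let n be a positive integer and F : F_{2^n} → F_{2^n}. Then F is an APN function (Δ_F = 2) if and only if for all a, b ∈ F_{2^n}: ∇_F(a,b) = 0 whenever ab ≠ 0 and a ≠ b, and ∇_F(a,b) = 2^n whenever ab = 0 or a = b. -/
open Finset

lemma ddt_le_diffUnif {K : Type*} [Field K] [Fintype K] [DecidableEq K] (f : K → K)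
    (a b : K) (ha : a ≠ 0) : ddtEntry f a b ≤ diffUnif f := by
  have hmem : (a, b) ∈ ((Finset.univ.filter fun a : K => a ≠ 0) ×ˢ Finset.univ) := by
    rw [Finset.mem_product, Finset.mem_filter]
    exact ⟨⟨Finset.mem_univ _, ha⟩, Finset.mem_univ _⟩
  exact Finset.le_sup (f := fun ab => ddtEntry f ab.1 ab.2) hmem

lemma sozd_trivial {K : Type*} [Field K] [Fintype K] [DecidableEq K] [CharP K 2]
    (f : K → K) (a b : K) (h : a * b = 0 ∨ a = b) :
    sozdSpec f a b = Fintype.card K := by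
  rw [sozdSpec, ← Finset.card_univ]
  congr 1
  rw [Finset.filter_eq_self]
  intro X _
  rcases h with h | h
  · rcases mul_eq_zero.mp h with h | h
    · subst h; simp only [add_zero, zero_add]; ring
    · subst h; simp only [add_zero]; ring
  · subst h
    have hX : X + a + a = X := by
      rw [add_assoc, CharTwo.add_self_eq_zero, add_zero]
    rw [hX]
    linear_combination (CharTwo.add_self_eq_zero (f X)) - (CharTwo.add_self_eq_zero (f (X + a)))

/-- Characterization of APN functions over `F_{2^n}` via the second-order zero
differential spectrum: `F` is APN iff `∇_F(a,b) = 0` whenever `ab ≠ 0` and `a ≠ b`,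
and `∇_F(a,b) = 2^n` whenever `ab = 0` or `a = b`. -/
theorem APN_iff_sozd_spectrum_char_two
    {n : ℕ} (hn : 0 < n)
    {K : Type*} [Field K] [Fintype K] [DecidableEq K] [CharP K 2]
    (hcard : Fintype.card K = 2 ^ n)
    (f : K → K) :
    diffUnif f = 2 ↔
      ∀ a b : K,
        (a * b ≠ 0 ∧ a ≠ b → sozdSpec f a b = 0) ∧
        (a * b = 0 ∨ a = b → sozdSpec f a b = 2 ^ n) := by
  constructor
  · intro hdu a b
    refine ⟨?_, fun h => by rw [sozd_trivial f a b h, hcard]⟩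
    rintro ⟨hab, hne⟩
    have ha : a ≠ 0 := fun h => hab (by simp [h])
    have hb : b ≠ 0 := fun h => hab (by simp [h])
    rw [sozdSpec, Finset.card_eq_zero, Finset.filter_eq_empty_iff]
    intro X _ hX
    set c := f (X + a) - f X with hc
    have hsubset : ({X, X + b, X + a} : Finset K) ⊆
        Finset.univ.filter (fun Y : K => f (Y + a) - f Y = c) := by
      intro Y hY
      simp only [Finset.mem_insert, Finset.mem_singleton] at hY
      rw [Finset.mem_filter]
      refine ⟨Finset.mem_univ _, ?_⟩
      rcases hY with rfl | rfl | rfl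
      · rfl
      · have hc1 : X + b + a = X + a + b := by ring
        rw [hc1]
        linear_combination hX
      · have hc2 : X + a + a = X := by
          rw [add_assoc, CharTwo.add_self_eq_zero, add_zero]
        rw [hc2]
        linear_combination (CharTwo.add_self_eq_zero (f X)) -
          (CharTwo.add_self_eq_zero (f (X + a)))
    have hd1 : X ≠ X + b := fun h => hb ((left_eq_add).mp h)
    have hd2 : X ≠ X + a := fun h => ha ((left_eq_add).mp h)
    have hd3 : X + b ≠ X + a := fun h => hne (add_left_cancel h).symm
    have h3 : ({X, X + b, X + a} : Finset K).card = 3 := by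
      rw [Finset.card_insert_of_notMem (by simp [hd1, hd2]),
        Finset.card_insert_of_notMem (by simp [hd3]), Finset.card_singleton]
    have hge : 3 ≤ ddtEntry f a c := by
      rw [ddtEntry, ← h3]
      exact Finset.card_le_card hsubset
    have hle : ddtEntry f a c ≤ diffUnif f := ddt_le_diffUnif f a c ha
    omega
  · intro h
    apply le_antisymm
    · apply Finset.sup_le
      rintro ⟨a, b⟩ hab
      rw [Finset.mem_product, Finset.mem_filter] at hab
      have ha : a ≠ 0 := hab.1.2
      by_contra hgt
      push_neg at hgt
      have h3 : 3 ≤ ddtEntry f a b := hgt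
      rw [ddtEntry] at h3
      set S := Finset.univ.filter (fun Y : K => f (Y + a) - f Y = b) with hS
      obtain ⟨X, hXmem⟩ := Finset.card_pos.mp (by omega : 0 < S.card)
      have hXeq : f (X + a) - f X = b := (Finset.mem_filter.mp hXmem).2
      have hns : ¬ S ⊆ ({X, X + a} : Finset K) := by
        intro hs
        have := Finset.card_le_card hs
        have h2 : ({X, X + a} : Finset K).card ≤ 2 :=
          le_trans (Finset.card_insert_le _ _) (by simp)
        omega
      obtain ⟨Y, hYmem, hYnot⟩ := Finset.not_subset.mp hns
      have hYeq : f (Y + a) - f Y = b := (Finset.mem_filter.mp hYmem).2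
      simp only [Finset.mem_insert, Finset.mem_singleton, not_or] at hYnot
      obtain ⟨hYX, hYXa⟩ := hYnot
      set b' := Y + X with hb'
      have hb'0 : b' ≠ 0 := by
        intro h0
        have h0' : Y + X = 0 := h0
        exact hYX (by linear_combination h0' - CharTwo.add_self_eq_zero X)
      have hab' : a ≠ b' := by
        intro h0
        have h0' : a = Y + X := h0
        exact hYXa (by linear_combination - h0' - CharTwo.add_self_eq_zero X)
      have hzero : sozdSpec f a b' = 0 := (h a b').1 ⟨mul_ne_zero ha hb'0, hab'⟩
      rw [sozdSpec, Finset.card_eq_zero, Finset.filter_eq_empty_iff] at hzero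
      apply hzero (Finset.mem_univ X)
      have hXb' : X + b' = Y := by
        rw [hb']
        linear_combination CharTwo.add_self_eq_zero X
      have hXab' : X + a + b' = Y + a := by
        rw [hb']
        linear_combination CharTwo.add_self_eq_zero X
      rw [hXab', hXb']
      linear_combination hYeq - hXeq
    · have h1 : (1 : K) ≠ 0 := one_ne_zero
      have hge : 2 ≤ ddtEntry f 1 (f (0 + 1) - f 0) := by
        have hsub : ({0, 1} : Finset K) ⊆
            Finset.univ.filter (fun Y : K => f (Y + 1) - f Y = f (0 + 1) - f 0) := by
          intro Y hY
          simp only [Finset.mem_insert, Finset.mem_singleton] at hY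
          rw [Finset.mem_filter]
          refine ⟨Finset.mem_univ _, ?_⟩
          rcases hY with rfl | rfl
          · rfl
          · have h11 : (1 : K) + 1 = 0 := CharTwo.add_self_eq_zero 1
            rw [h11, zero_add]
            linear_combination (CharTwo.add_self_eq_zero (f 0)) -
              (CharTwo.add_self_eq_zero (f 1))
        have : ({0, 1} : Finset K).card = 2 := by
          rw [Finset.card_insert_of_notMem (by simp), Finset.card_singleton]
        rw [ddtEntry, ← this]
        exact Finset.card_le_card hsub
      exact le_trans hge (ddt_le_diffUnif f 1 _ h1)
end

section
/- Let p be an odd prime, n a positive integer, q = p^n, and F : F_q → F_q. Then F is a PN function (Δ_F = 1) if and only if for all a, b ∈ F_q: ∇_F(a,b) = 0 whenever ab ≠ 0, and ∇_F(a,b) = p^n whenever ab = 0. -/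
open Finset

/-- Characterization of PN functions over `F_{p^n}`, `p` odd, via the second-order zero
differential spectrum: `F` is PN iff `∇_F(a,b) = 0` whenever `ab ≠ 0`, and
`∇_F(a,b) = p^n` whenever `ab = 0`. -/
theorem PN_iff_sozd_spectrum_odd_char
    {p n : ℕ} (hp : p.Prime) (hp2 : p ≠ 2) (hn : 0 < n)
    {K : Type*} [Field K] [Fintype K] [DecidableEq K] [CharP K p]
    (hcard : Fintype.card K = p ^ n)
    (f : K → K) :
    diffUnif f = 1 ↔
      ∀ a b : K,
        (a * b ≠ 0 → sozdSpec f a b = 0) ∧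
        (a * b = 0 → sozdSpec f a b = p ^ n) := by
  have hzero : ∀ a b : K, a * b = 0 → sozdSpec f a b = p ^ n := by
    intro a b hab
    rw [← hcard, ← Finset.card_univ, sozdSpec]
    congr 1
    apply Finset.filter_true_of_mem
    intro X _
    rcases mul_eq_zero.mp hab with h | h <;> subst h <;> simp only [add_zero] <;> ring
  constructor
  · intro h a b
    rw [diffUnif] at h
    refine ⟨?_, hzero a b⟩
    intro hab
    obtain ⟨ha, hb⟩ := mul_ne_zero_iff.mp hab
    rw [sozdSpec, Finset.card_eq_zero, Finset.filter_eq_empty_iff]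
    intro X _ hX
    have hle := Finset.le_sup
        (s := (Finset.univ.filter fun a : K => a ≠ 0) ×ˢ (Finset.univ : Finset K))
        (f := fun ab : K × K => ddtEntry f ab.1 ab.2) (b := (a, f (X + a) - f X))
        (Finset.mem_product.mpr ⟨Finset.mem_filter.mpr ⟨Finset.mem_univ _, ha⟩,
          Finset.mem_univ _⟩)
    rw [h] at hle
    simp only at hle
    have h2 : 2 ≤ ddtEntry f a (f (X + a) - f X) := by
      rw [ddtEntry]
      have hsub : ({X, X + b} : Finset K) ⊆
          Finset.univ.filter (fun Y => f (Y + a) - f Y = f (X + a) - f X) := by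
        intro Y hY
        simp only [Finset.mem_insert, Finset.mem_singleton] at hY
        rcases hY with rfl | rfl
        · simp
        · simp only [Finset.mem_filter, Finset.mem_univ, true_and]
          rw [show X + b + a = X + a + b from by ring]
          linear_combination hX
      calc 2 = ({X, X + b} : Finset K).card := by
              rw [Finset.card_pair (fun hEq => hb (left_eq_add.mp hEq))]
        _ ≤ _ := Finset.card_le_card hsub
    omega
  · intro h
    have hle : ∀ a b : K, a ≠ 0 → ddtEntry f a b ≤ 1 := by
      intro a b ha
      by_contra hgt
      push_neg at hgt
      rw [ddtEntry, Finset.one_lt_card] at hgt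
      obtain ⟨X, hXmem, Y, hYmem, hXY⟩ := hgt
      simp only [Finset.mem_filter, Finset.mem_univ, true_and] at hXmem hYmem
      have hbne : Y - X ≠ 0 := sub_ne_zero.mpr (Ne.symm hXY)
      have hz := (h a (Y - X)).1 (mul_ne_zero ha hbne)
      rw [sozdSpec, Finset.card_eq_zero, Finset.filter_eq_empty_iff] at hz
      refine hz (Finset.mem_univ X) ?_
      rw [show X + a + (Y - X) = Y + a from by ring, show X + (Y - X) = Y from by ring]
      linear_combination hYmem - hXmem
    rw [diffUnif]
    refine le_antisymm (Finset.sup_le ?_) ?_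
    · rintro ⟨a, b⟩ hmem
      exact hle a b (Finset.mem_filter.mp (Finset.mem_product.mp hmem).1).2
    · refine le_trans ?_ (Finset.le_sup (b := ((1 : K), f (0 + 1) - f 0)) ?_)
      · exact Finset.card_pos.mpr ⟨0, by simp [ddtEntry]⟩
      · exact Finset.mem_product.mpr ⟨Finset.mem_filter.mpr ⟨Finset.mem_univ _, one_ne_zero⟩,
          Finset.mem_univ _⟩
end
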